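/- arXiv:1303.1259 — 2 statements merged into one kernel-verified Lean document; each statement's English description precedes it below -/
import Mathlib

section
/- Let Γ: ℝ × (−ε, ε) → ℝ³ be a smooth family of curves such that γ := Γ(·, 0) is parametrized by centroaffine arclength, and suppose the variation vector field X(x) = ∂Γ/∂t(x, 0) is written as X = a·γ + b·γ' + c·γ'' for smooth real functions a, b, c. Then the variation of the determinant satisfies ∂/∂t |Γ, Γ_x, Γ_xx| evaluated at t = 0 equals 3a + 3b' + c'' + 2p₁c, where p₁ = |γ, γ''', γ''|. In particular, X preserves the centroaffine arclength differential to first order if and only if b' = −a − (1/3)(c'' + 2p₁c). -/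
open scoped ContDiff

/-- `det3 u v w` is the determinant of the 3×3 matrix with columns (equivalently, rows)
`u`, `v`, `w` in `ℝ³`. -/
noncomputable def det3 (u v w : Fin 3 → ℝ) : ℝ := Matrix.det (Matrix.of ![u, v, w])

lemma det3_eq (u v w : Fin 3 → ℝ) :
    det3 u v w = u 0 * v 1 * w 2 - u 0 * v 2 * w 1 - u 1 * v 0 * w 2
      + u 1 * v 2 * w 0 + u 2 * v 0 * w 1 - u 2 * v 1 * w 0 := by
  simp [det3, Matrix.det_fin_three]

lemma one_le_infty : (∞ : WithTop ℕ∞) ≠ 0 := by simp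

lemma det3_hasDerivAt {f g h : ℝ → Fin 3 → ℝ} {f' g' h' : Fin 3 → ℝ} {t : ℝ}
    (hf : HasDerivAt f f' t) (hg : HasDerivAt g g' t) (hh : HasDerivAt h h' t) :
    HasDerivAt (fun s => det3 (f s) (g s) (h s))
      (det3 f' (g t) (h t) + det3 (f t) g' (h t) + det3 (f t) (g t) h') t := by
  have Hf : ∀ i, HasDerivAt (fun s => f s i) (f' i) t := hasDerivAt_pi.mp hf
  have Hg : ∀ i, HasDerivAt (fun s => g s i) (g' i) t := hasDerivAt_pi.mp hg
  have Hh : ∀ i, HasDerivAt (fun s => h s i) (h' i) t := hasDerivAt_pi.mp hh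
  have e : (fun s => det3 (f s) (g s) (h s))
      = fun s => f s 0 * g s 1 * h s 2 - f s 0 * g s 2 * h s 1 - f s 1 * g s 0 * h s 2
        + f s 1 * g s 2 * h s 0 + f s 2 * g s 0 * h s 1 - f s 2 * g s 1 * h s 0 :=
    funext fun s => det3_eq _ _ _
  rw [e]
  have H := (((((((Hf 0).mul (Hg 1)).mul (Hh 2)).sub (((Hf 0).mul (Hg 2)).mul (Hh 1))).sub
      (((Hf 1).mul (Hg 0)).mul (Hh 2))).add (((Hf 1).mul (Hg 2)).mul (Hh 0))).add
      (((Hf 2).mul (Hg 0)).mul (Hh 1))).sub (((Hf 2).mul (Hg 1)).mul (Hh 0))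
  exact H.congr_deriv (by simp only [Pi.mul_apply]; rw [det3_eq, det3_eq, det3_eq]; ring)

section Partials

variable {E : Type*} [NormedAddCommGroup E] [NormedSpace ℝ E]

lemma partial_fst {f : ℝ × ℝ → E} {p : ℝ × ℝ} (hd : DifferentiableAt ℝ f p) :
    HasDerivAt (fun x' => f (x', p.2)) (fderiv ℝ f p (1, 0)) p.1 := by
  have hc : HasDerivAt (fun x' : ℝ => ((x', p.2) : ℝ × ℝ)) (1, 0) p.1 :=
    (hasDerivAt_id p.1).prodMk (hasDerivAt_const p.1 p.2)
  simpa [Function.comp_def] using hd.hasFDerivAt.comp_hasDerivAt p.1 hc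

lemma partial_snd {f : ℝ × ℝ → E} {p : ℝ × ℝ} (hd : DifferentiableAt ℝ f p) :
    HasDerivAt (fun t => f (p.1, t)) (fderiv ℝ f p (0, 1)) p.2 := by
  have hc : HasDerivAt (fun t : ℝ => ((p.1, t) : ℝ × ℝ)) (0, 1) p.2 :=
    (hasDerivAt_const p.2 p.1).prodMk (hasDerivAt_id p.2)
  simpa [Function.comp_def] using hd.hasFDerivAt.comp_hasDerivAt p.2 hc

lemma fderiv_apply_contDiffAt {f : ℝ × ℝ → E} {U : Set (ℝ × ℝ)} (hU : IsOpen U)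
    (hf : ContDiffOn ℝ ∞ f U) {p : ℝ × ℝ} (hp : p ∈ U) (v : ℝ × ℝ) :
    ContDiffAt ℝ ∞ (fun q => fderiv ℝ f q v) p := by
  have h1 : ContDiffAt ℝ ∞ (fderiv ℝ f) p :=
    (hf.contDiffAt (hU.mem_nhds hp)).fderiv_right le_rfl
  exact ((ContinuousLinearMap.apply ℝ E v).contDiff.contDiffAt).comp p h1

lemma clairaut {f : ℝ × ℝ → E} {U : Set (ℝ × ℝ)} (hU : IsOpen U)
    (hf : ContDiffOn ℝ ∞ f U) {p : ℝ × ℝ} (hp : p ∈ U) (v w : ℝ × ℝ) :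
    fderiv ℝ (fun q => fderiv ℝ f q v) p w = fderiv ℝ (fun q => fderiv ℝ f q w) p v := by
  have hat : ∀ q ∈ U, ContDiffAt ℝ ∞ f q := fun q hq => hf.contDiffAt (hU.mem_nhds hq)
  have h1 : ContDiffAt ℝ ∞ (fderiv ℝ f) p := (hat p hp).fderiv_right le_rfl
  have hdiff : DifferentiableAt ℝ (fderiv ℝ f) p := h1.differentiableAt one_le_infty
  have hev : ∀ᶠ y in nhds p, HasFDerivAt f (fderiv ℝ f y) y := by
    filter_upwards [hU.mem_nhds hp] with y hy
    exact ((hat y hy).differentiableAt one_le_infty).hasFDerivAt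
  have hsymm := second_derivative_symmetric_of_eventually hev hdiff.hasFDerivAt v w
  have hv : HasFDerivAt (fun q => fderiv ℝ f q v)
      ((ContinuousLinearMap.apply ℝ E v).comp (fderiv ℝ (fderiv ℝ f) p)) p :=
    (ContinuousLinearMap.apply ℝ E v).hasFDerivAt.comp p hdiff.hasFDerivAt
  have hw : HasFDerivAt (fun q => fderiv ℝ f q w)
      ((ContinuousLinearMap.apply ℝ E w).comp (fderiv ℝ (fderiv ℝ f) p)) p :=
    (ContinuousLinearMap.apply ℝ E w).hasFDerivAt.comp p hdiff.hasFDerivAt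
  rw [hv.fderiv, hw.fderiv]
  simpa using hsymm.symm

end Partials

lemma var0 {V : Set ℝ} (hV : IsOpen V) (h0 : (0:ℝ) ∈ V)
    {F : ℝ → ℝ → Fin 3 → ℝ}
    (hF : ContDiffOn ℝ ∞ (fun p : ℝ × ℝ => F p.1 p.2) (Set.univ ×ˢ V))
    {X : ℝ → Fin 3 → ℝ} (hX : ∀ x', deriv (fun t => F x' t) 0 = X x') (x : ℝ) :
    HasDerivAt (fun t => F x t) (X x) 0 := by
  have hU : IsOpen (Set.univ ×ˢ V) := (isOpen_univ : IsOpen (Set.univ : Set ℝ)).prod hV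
  have hd : DifferentiableAt ℝ (fun p : ℝ × ℝ => F p.1 p.2) (x, 0) :=
    (hF.contDiffAt (hU.mem_nhds ⟨trivial, h0⟩)).differentiableAt one_le_infty
  have h := partial_snd hd
  have hval : fderiv ℝ (fun p : ℝ × ℝ => F p.1 p.2) (x, 0) (0, 1) = X x := by
    rw [← hX x]; exact h.deriv.symm
  rw [hval] at h
  exact h

lemma varA {V : Set ℝ} (hV : IsOpen V) (h0 : (0:ℝ) ∈ V)
    {F : ℝ → ℝ → Fin 3 → ℝ}
    (hF : ContDiffOn ℝ ∞ (fun p : ℝ × ℝ => F p.1 p.2) (Set.univ ×ˢ V))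
    {X X₁ : ℝ → Fin 3 → ℝ} (hX : ∀ x', deriv (fun t => F x' t) 0 = X x')
    (hX₁ : ∀ x', HasDerivAt X (X₁ x') x') (x : ℝ) :
    HasDerivAt (fun t => deriv (fun x' => F x' t) x) (X₁ x) 0 := by
  have hU : IsOpen (Set.univ ×ˢ V) := (isOpen_univ : IsOpen (Set.univ : Set ℝ)).prod hV
  have hmem : ∀ x' t : ℝ, t ∈ V → ((x', t) : ℝ × ℝ) ∈ Set.univ ×ˢ V :=
    fun _ _ ht => ⟨trivial, ht⟩
  have hdG : ∀ q ∈ Set.univ ×ˢ V, DifferentiableAt ℝ (fun p : ℝ × ℝ => F p.1 p.2) q :=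
    fun q hq => (hF.contDiffAt (hU.mem_nhds hq)).differentiableAt one_le_infty
  have hdfx : DifferentiableAt ℝ
      (fun q => fderiv ℝ (fun p : ℝ × ℝ => F p.1 p.2) q ((1:ℝ), (0:ℝ))) (x, 0) :=
    (fderiv_apply_contDiffAt hU hF (hmem x 0 h0) _).differentiableAt one_le_infty
  have hdft : DifferentiableAt ℝ
      (fun q => fderiv ℝ (fun p : ℝ × ℝ => F p.1 p.2) q ((0:ℝ), (1:ℝ))) (x, 0) :=
    (fderiv_apply_contDiffAt hU hF (hmem x 0 h0) _).differentiableAt one_le_infty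
  have hev : (fun t => deriv (fun x' => F x' t) x)
      =ᶠ[nhds 0] (fun t => fderiv ℝ (fun p : ℝ × ℝ => F p.1 p.2) (x, t) (1, 0)) := by
    filter_upwards [hV.mem_nhds h0] with t ht
    exact (partial_fst (hdG (x, t) (hmem x t ht))).deriv
  have hB := partial_snd hdfx
  have hclair := clairaut hU hF (hmem x 0 h0) ((1:ℝ), (0:ℝ)) ((0:ℝ), (1:ℝ))
  have hA := partial_fst hdft
  have hfun : (fun x' => fderiv ℝ (fun p : ℝ × ℝ => F p.1 p.2) (x', 0) ((0:ℝ), (1:ℝ))) = X :=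
    funext fun x' => by
      rw [← hX x']
      exact ((partial_snd (hdG (x', 0) (hmem x' 0 h0))).deriv).symm
  rw [show ((x, (0:ℝ)).1 : ℝ) = x from rfl] at hA
  rw [hfun] at hA
  have hval : fderiv ℝ (fun q => fderiv ℝ (fun p : ℝ × ℝ => F p.1 p.2) q ((0:ℝ), (1:ℝ)))
      (x, 0) (1, 0) = X₁ x := hA.unique (hX₁ x)
  rw [hclair, hval] at hB
  exact hB.congr_of_eventuallyEq hev

lemma varB {V : Set ℝ} (hV : IsOpen V) (h0 : (0:ℝ) ∈ V)
    {F : ℝ → ℝ → Fin 3 → ℝ}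
    (hF : ContDiffOn ℝ ∞ (fun p : ℝ × ℝ => F p.1 p.2) (Set.univ ×ˢ V))
    {X X₁ X₂ : ℝ → Fin 3 → ℝ} (hX : ∀ x', deriv (fun t => F x' t) 0 = X x')
    (hX₁ : ∀ x', HasDerivAt X (X₁ x') x')
    (hX₂ : ∀ x', HasDerivAt X₁ (X₂ x') x') (x : ℝ) :
    HasDerivAt (fun t => deriv (fun x' => deriv (fun x'' => F x'' t) x') x) (X₂ x) 0 := by
  have hU : IsOpen (Set.univ ×ˢ V) := (isOpen_univ : IsOpen (Set.univ : Set ℝ)).prod hV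
  have hdG : ∀ q ∈ Set.univ ×ˢ V, DifferentiableAt ℝ (fun p : ℝ × ℝ => F p.1 p.2) q :=
    fun q hq => (hF.contDiffAt (hU.mem_nhds hq)).differentiableAt one_le_infty
  have hFxC : ContDiffOn ℝ ∞
      (fun p : ℝ × ℝ => deriv (fun x'' => F x'' p.2) p.1) (Set.univ ×ˢ V) := by
    apply ContDiffOn.congr
      (f := fun q : ℝ × ℝ => fderiv ℝ (fun p : ℝ × ℝ => F p.1 p.2) q ((1:ℝ), (0:ℝ)))
    · exact fun q hq => (fderiv_apply_contDiffAt hU hF hq _).contDiffWithinAt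
    · exact fun q hq => (partial_fst (hdG q hq)).deriv
  have hX' : ∀ x', deriv (fun t => deriv (fun x'' => F x'' t) x') 0 = X₁ x' :=
    fun x' => (varA hV h0 hF hX hX₁ x').deriv
  exact varA hV h0 hFxC hX' hX₂ x

lemma key_alg (g g1 g2 g3 g4 Xv X1v X2v : Fin 3 → ℝ) (A B C A' B' C' A'' B'' C'' P : ℝ)
    (hE1 : det3 g g1 g2 = 1) (hE3 : det3 g g1 g3 = 0) (hE4 : det3 g g1 g4 = P)
    (hP : det3 g g3 g2 = P)
    (hXv : Xv = A • g + B • g1 + C • g2)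
    (hX1v : X1v = (A • g1 + A' • g) + (B • g2 + B' • g1) + (C • g3 + C' • g2))
    (hX2v : X2v = ((A • g2 + A' • g1) + (A' • g1 + A'' • g))
      + ((B • g3 + B' • g2) + (B' • g2 + B'' • g1))
      + ((C • g4 + C' • g3) + (C' • g3 + C'' • g2))) :
    det3 Xv g1 g2 + det3 g X1v g2 + det3 g g1 X2v = 3*A + 3*B' + C'' + 2*P*C := by
  subst hXv hX1v hX2v
  simp only [det3_eq, Pi.add_apply, Pi.smul_apply, smul_eq_mul] at *
  linear_combination (3*A + 3*B' + C'') * hE1 + (B + 2*C') * hE3 + C * hE4 + C * hP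

/-- First variation of the determinant `|Γ, Γ_x, Γ_xx|` along a variation field
`X = aγ + bγ' + cγ''` of a centroaffine arclength-parametrized curve `γ`:
it equals `3a + 3b' + c'' + 2p₁c`; in particular the variation preserves the
centroaffine arclength differential to first order iff `b' = −a − (1/3)(c'' + 2p₁c)`. -/
theorem variation_of_determinant
    (ε : ℝ) (hε : 0 < ε) (Γ : ℝ → ℝ → Fin 3 → ℝ)
    (hΓ : ContDiffOn ℝ (⊤ : ℕ∞) (fun p : ℝ × ℝ => Γ p.1 p.2) (Set.univ ×ˢ Set.Ioo (-ε) ε))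
    (γ : ℝ → Fin 3 → ℝ) (hγ : γ = fun x => Γ x 0)
    (harc : ∀ x, det3 (γ x) (deriv γ x) (deriv (deriv γ) x) = 1)
    (a b c : ℝ → ℝ)
    (ha : ContDiff ℝ (⊤ : ℕ∞) a) (hb : ContDiff ℝ (⊤ : ℕ∞) b) (hc : ContDiff ℝ (⊤ : ℕ∞) c)
    (hX : ∀ x, deriv (fun t => Γ x t) 0
        = a x • γ x + b x • deriv γ x + c x • deriv (deriv γ) x)
    (p₁ : ℝ → ℝ)
    (hp₁ : ∀ x, p₁ x = det3 (γ x) (deriv (deriv (deriv γ)) x) (deriv (deriv γ) x))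
    (Γx Γxx : ℝ → ℝ → Fin 3 → ℝ)
    (hΓx : ∀ x t, Γx x t = deriv (fun x' => Γ x' t) x)
    (hΓxx : ∀ x t, Γxx x t = deriv (fun x' => Γx x' t) x) :
    (∀ x, deriv (fun t => det3 (Γ x t) (Γx x t) (Γxx x t)) 0
        = 3 * a x + 3 * deriv b x + deriv (deriv c) x + 2 * p₁ x * c x) ∧
    ((∀ x, deriv (fun t => det3 (Γ x t) (Γx x t) (Γxx x t)) 0 = 0) ↔
      (∀ x, deriv b x = -a x - (1/3) * (deriv (deriv c) x + 2 * p₁ x * c x))) := by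
  have hV : IsOpen (Set.Ioo (-ε) ε) := isOpen_Ioo
  have h0 : (0:ℝ) ∈ Set.Ioo (-ε) ε := ⟨by linarith, hε⟩
  have hF : ContDiffOn ℝ ∞ (fun p : ℝ × ℝ => Γ p.1 p.2) (Set.univ ×ˢ Set.Ioo (-ε) ε) :=
    hΓ.of_le (by simp)
  -- smoothness of γ
  have hγC : ContDiff ℝ ∞ γ := by
    rw [contDiff_iff_contDiffAt]
    intro x
    have hU : IsOpen (Set.univ ×ˢ Set.Ioo (-ε) ε) :=
      (isOpen_univ : IsOpen (Set.univ : Set ℝ)).prod hV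
    have h1 : ContDiffAt ℝ ∞ (fun p : ℝ × ℝ => Γ p.1 p.2) (x, 0) :=
      hF.contDiffAt (hU.mem_nhds ⟨trivial, h0⟩)
    have h2 : ContDiffAt ℝ ∞ (fun x : ℝ => ((x, (0:ℝ)) : ℝ × ℝ)) x :=
      (contDiff_id.prodMk contDiff_const).contDiffAt
    have h3 := h1.comp x h2
    rw [hγ]; exact h3
  have hg1C : ContDiff ℝ ∞ (deriv γ) := (contDiff_infty_iff_deriv.mp hγC).2
  have hg2C : ContDiff ℝ ∞ (deriv (deriv γ)) := (contDiff_infty_iff_deriv.mp hg1C).2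
  have hg3C : ContDiff ℝ ∞ (deriv (deriv (deriv γ))) := (contDiff_infty_iff_deriv.mp hg2C).2
  have hγd : ∀ x, HasDerivAt γ (deriv γ x) x :=
    fun x => (hγC.differentiable one_le_infty x).hasDerivAt
  have hg1d : ∀ x, HasDerivAt (deriv γ) (deriv (deriv γ) x) x :=
    fun x => (hg1C.differentiable one_le_infty x).hasDerivAt
  have hg2d : ∀ x, HasDerivAt (deriv (deriv γ)) (deriv (deriv (deriv γ)) x) x :=
    fun x => (hg2C.differentiable one_le_infty x).hasDerivAt
  have hg3d : ∀ x, HasDerivAt (deriv (deriv (deriv γ))) (deriv (deriv (deriv (deriv γ))) x) x :=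
    fun x => (hg3C.differentiable one_le_infty x).hasDerivAt
  have had : ∀ x, HasDerivAt a (deriv a x) x :=
    fun x => (((ha.of_le (by simp)).differentiable one_le_infty) x).hasDerivAt
  have hbd : ∀ x, HasDerivAt b (deriv b x) x :=
    fun x => (((hb.of_le (by simp)).differentiable one_le_infty) x).hasDerivAt
  have hcd : ∀ x, HasDerivAt c (deriv c x) x :=
    fun x => (((hc.of_le (by simp)).differentiable one_le_infty) x).hasDerivAt
  have hadC : ContDiff ℝ ∞ (deriv a) := (contDiff_infty_iff_deriv.mp (ha.of_le (by simp))).2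
  have hbdC : ContDiff ℝ ∞ (deriv b) := (contDiff_infty_iff_deriv.mp (hb.of_le (by simp))).2
  have hcdC : ContDiff ℝ ∞ (deriv c) := (contDiff_infty_iff_deriv.mp (hc.of_le (by simp))).2
  have hadd : ∀ x, HasDerivAt (deriv a) (deriv (deriv a) x) x :=
    fun x => ((hadC.differentiable one_le_infty) x).hasDerivAt
  have hbdd : ∀ x, HasDerivAt (deriv b) (deriv (deriv b) x) x :=
    fun x => ((hbdC.differentiable one_le_infty) x).hasDerivAt
  have hcdd : ∀ x, HasDerivAt (deriv c) (deriv (deriv c) x) x :=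
    fun x => ((hcdC.differentiable one_le_infty) x).hasDerivAt
  -- the variation field and its derivatives
  obtain ⟨X, hXdef⟩ : ∃ X : ℝ → Fin 3 → ℝ,
      X = fun x => a x • γ x + b x • deriv γ x + c x • deriv (deriv γ) x := ⟨_, rfl⟩
  obtain ⟨X₁, hX₁def⟩ : ∃ X₁ : ℝ → Fin 3 → ℝ,
      X₁ = fun x => (a x • deriv γ x + deriv a x • γ x)
        + (b x • deriv (deriv γ) x + deriv b x • deriv γ x)
        + (c x • deriv (deriv (deriv γ)) x + deriv c x • deriv (deriv γ) x) := ⟨_, rfl⟩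
  obtain ⟨X₂, hX₂def⟩ : ∃ X₂ : ℝ → Fin 3 → ℝ,
      X₂ = fun x => ((a x • deriv (deriv γ) x + deriv a x • deriv γ x)
          + (deriv a x • deriv γ x + deriv (deriv a) x • γ x))
        + ((b x • deriv (deriv (deriv γ)) x + deriv b x • deriv (deriv γ) x)
          + (deriv b x • deriv (deriv γ) x + deriv (deriv b) x • deriv γ x))
        + ((c x • deriv (deriv (deriv (deriv γ))) x + deriv c x • deriv (deriv (deriv γ)) x)
          + (deriv c x • deriv (deriv (deriv γ)) x + deriv (deriv c) x • deriv (deriv γ) x)) :=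
    ⟨_, rfl⟩
  have hX0 : ∀ x, deriv (fun t => Γ x t) 0 = X x := fun x => by rw [hXdef]; exact hX x
  have hXd : ∀ x, HasDerivAt X (X₁ x) x := fun x => by
    rw [hXdef, hX₁def]
    exact (((had x).smul (hγd x)).add ((hbd x).smul (hg1d x))).add ((hcd x).smul (hg2d x))
  have hX₁d : ∀ x, HasDerivAt X₁ (X₂ x) x := fun x => by
    rw [hX₁def, hX₂def]
    exact ((((had x).smul (hg1d x)).add ((hadd x).smul (hγd x))).add
      (((hbd x).smul (hg2d x)).add ((hbdd x).smul (hg1d x)))).add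
      (((hcd x).smul (hg3d x)).add ((hcdd x).smul (hg2d x)))
  -- values at t = 0
  have hΓ0 : ∀ x, Γ x 0 = γ x := fun x => (congrFun hγ x).symm
  have hΓx0 : ∀ x, Γx x 0 = deriv γ x := fun x => by rw [hΓx, ← hγ]
  have hΓxx0 : ∀ x, Γxx x 0 = deriv (deriv γ) x := fun x => by
    rw [hΓxx]
    have hfun : (fun x' => Γx x' 0) = deriv γ := funext fun x' => hΓx0 x'
    rw [hfun]
  -- consequences of the arclength normalization
  have hE3 : ∀ x, det3 (γ x) (deriv γ x) (deriv (deriv (deriv γ)) x) = 0 := by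
    intro x
    have hD := det3_hasDerivAt (hγd x) (hg1d x) (hg2d x)
    have hconst : (fun s => det3 (γ s) (deriv γ s) (deriv (deriv γ) s)) = fun _ => (1:ℝ) :=
      funext fun s => harc s
    rw [hconst] at hD
    have h0' := hD.unique (hasDerivAt_const x 1)
    simp only [det3_eq] at h0' ⊢
    linear_combination h0'
  have hE4 : ∀ x, det3 (γ x) (deriv γ x) (deriv (deriv (deriv (deriv γ))) x) = p₁ x := by
    intro x
    have hD := det3_hasDerivAt (hγd x) (hg1d x) (hg3d x)
    have hconst : (fun s => det3 (γ s) (deriv γ s) (deriv (deriv (deriv γ)) s))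
        = fun _ => (0:ℝ) := funext fun s => hE3 s
    rw [hconst] at hD
    have h0' := hD.unique (hasDerivAt_const x 0)
    have hp := hp₁ x
    simp only [det3_eq] at h0' hp ⊢
    linear_combination h0' - hp
  -- the main formula
  have main : ∀ x, deriv (fun t => det3 (Γ x t) (Γx x t) (Γxx x t)) 0
      = 3 * a x + 3 * deriv b x + deriv (deriv c) x + 2 * p₁ x * c x := by
    intro x
    have h1 : HasDerivAt (fun t => Γ x t) (X x) 0 := var0 hV h0 hF hX0 x
    have h2 : HasDerivAt (fun t => Γx x t) (X₁ x) 0 := by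
      have he : (fun t => Γx x t) = fun t => deriv (fun x' => Γ x' t) x :=
        funext fun t => hΓx x t
      rw [he]; exact varA hV h0 hF hX0 hXd x
    have h3 : HasDerivAt (fun t => Γxx x t) (X₂ x) 0 := by
      have he : (fun t => Γxx x t)
          = fun t => deriv (fun x' => deriv (fun x'' => Γ x'' t) x') x := by
        funext t
        rw [hΓxx]
        congr 1
        exact funext fun x' => hΓx x' t
      rw [he]; exact varB hV h0 hF hX0 hXd hX₁d x
    have hD : HasDerivAt (fun t => det3 (Γ x t) (Γx x t) (Γxx x t))
        (det3 (X x) (Γx x 0) (Γxx x 0) + det3 (Γ x 0) (X₁ x) (Γxx x 0)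
          + det3 (Γ x 0) (Γx x 0) (X₂ x)) 0 := det3_hasDerivAt h1 h2 h3
    rw [hΓ0 x, hΓx0 x, hΓxx0 x] at hD
    rw [hD.deriv]
    exact key_alg (γ x) (deriv γ x) (deriv (deriv γ) x) (deriv (deriv (deriv γ)) x)
      (deriv (deriv (deriv (deriv γ))) x) (X x) (X₁ x) (X₂ x)
      (a x) (b x) (c x) (deriv a x) (deriv b x) (deriv c x)
      (deriv (deriv a) x) (deriv (deriv b) x) (deriv (deriv c) x) (p₁ x)
      (harc x) (hE3 x) (hE4 x) ((hp₁ x).symm)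
      (by rw [hXdef]) (by rw [hX₁def]) (by rw [hX₂def])
  refine ⟨main, ?_, ?_⟩
  · intro h x
    have h1 := (main x).symm.trans (h x)
    linarith
  · intro h x
    rw [main x, h x]; ring
end

section
/- Let γ: ℝ → ℝ³ be smooth, 2π-periodic, and parametrized by centroaffine arclength, with Wilczynski invariants p₀, p₁. Let X = a·γ + b·γ' + c·γ'' with a, b, c smooth 2π-periodic functions satisfying b' = −a − (1/3)(c'' + 2p₁c). Then the first variation of the total curvature functional P(γ) = ∫₀^{2π} p₁ dx along X equals ∫₀^{2π} (−p₁a + (−p₀' + (2/3)p₁'' − (2/3)p₁²)c) dx, and this equals ω_γ(X, X_P) = ∫₀^{2π} |X, γ', X_P| dx for the vector field X_P = ((2/3)(p₁² − p₁'') + p₀')γ + (p₁' − p₀)γ' − p₁γ''. Hence X_P is a Hamiltonian vector field for the total curvature functional. -/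
open scoped ContDiff


open scoped ContDiff

lemma det3_expand (u v w : Fin 3 → ℝ) :
    det3 u v w = u 0 * (v 1 * w 2) - u 0 * (v 2 * w 1) - u 1 * (v 0 * w 2)
      + u 1 * (v 2 * w 0) + u 2 * (v 0 * w 1) - u 2 * (v 1 * w 0) := by
  simp [det3, Matrix.det_fin_three]; ring

lemma proj3 {f : ℝ → Fin 3 → ℝ} {f' : Fin 3 → ℝ} {x : ℝ}
    (h : HasDerivAt f f' x) (i : Fin 3) : HasDerivAt (fun y => f y i) (f' i) x :=
  ((ContinuousLinearMap.proj i : (Fin 3 → ℝ) →L[ℝ] ℝ).hasFDerivAt).comp_hasDerivAt x h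

lemma sd {f : ℝ → ℝ} (h : ContDiff ℝ ∞ f) : ContDiff ℝ ∞ (deriv f) :=
  (contDiff_infty_iff_deriv.mp h).2

lemma sdv {f : ℝ → Fin 3 → ℝ} (h : ContDiff ℝ ∞ f) : ContDiff ℝ ∞ (deriv f) :=
  (contDiff_infty_iff_deriv.mp h).2

lemma hd {f : ℝ → ℝ} (h : ContDiff ℝ ∞ f) (x : ℝ) : HasDerivAt f (deriv f x) x :=
  ((h.differentiable (by norm_num)) x).hasDerivAt

lemma hdv {f : ℝ → Fin 3 → ℝ} (h : ContDiff ℝ ∞ f) (x : ℝ) : HasDerivAt f (deriv f x) x :=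
  ((h.differentiable (by norm_num)) x).hasDerivAt

section dom
variable {E : Type*} [NormedAddCommGroup E] [NormedSpace ℝ E]

lemma contDiff_comp3 {f : E → Fin 3 → ℝ} (hf : ContDiff ℝ ∞ f) (i : Fin 3) :
    ContDiff ℝ ∞ (fun y => f y i) := contDiff_pi.mp hf i

lemma contDiff_det3 {f g h : E → Fin 3 → ℝ} (hf : ContDiff ℝ ∞ f)
    (hg : ContDiff ℝ ∞ g) (hh : ContDiff ℝ ∞ h) :
    ContDiff ℝ ∞ (fun y => det3 (f y) (g y) (h y)) := by
  simp only [det3_expand]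
  exact ((((((contDiff_comp3 hf 0).mul ((contDiff_comp3 hg 1).mul (contDiff_comp3 hh 2))).sub
    ((contDiff_comp3 hf 0).mul ((contDiff_comp3 hg 2).mul (contDiff_comp3 hh 1)))).sub
    ((contDiff_comp3 hf 1).mul ((contDiff_comp3 hg 0).mul (contDiff_comp3 hh 2)))).add
    ((contDiff_comp3 hf 1).mul ((contDiff_comp3 hg 2).mul (contDiff_comp3 hh 0)))).add
    ((contDiff_comp3 hf 2).mul ((contDiff_comp3 hg 0).mul (contDiff_comp3 hh 1)))).sub
    ((contDiff_comp3 hf 2).mul ((contDiff_comp3 hg 1).mul (contDiff_comp3 hh 0)))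

end dom

lemma hasDerivAt_det3 {f g h : ℝ → Fin 3 → ℝ} {f' g' h' : Fin 3 → ℝ} {x : ℝ}
    (hf : HasDerivAt f f' x) (hg : HasDerivAt g g' x) (hh : HasDerivAt h h' x) :
    HasDerivAt (fun y => det3 (f y) (g y) (h y))
      (det3 f' (g x) (h x) + det3 (f x) g' (h x) + det3 (f x) (g x) h') x := by
  simp only [det3_expand]
  have H := (((((((proj3 hf 0).mul ((proj3 hg 1).mul (proj3 hh 2))).sub
    ((proj3 hf 0).mul ((proj3 hg 2).mul (proj3 hh 1)))).sub
    ((proj3 hf 1).mul ((proj3 hg 0).mul (proj3 hh 2)))).add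
    ((proj3 hf 1).mul ((proj3 hg 2).mul (proj3 hh 0)))).add
    ((proj3 hf 2).mul ((proj3 hg 0).mul (proj3 hh 1)))).sub
    ((proj3 hf 2).mul ((proj3 hg 1).mul (proj3 hh 0))))
  exact H.congr_deriv (by simp only [Pi.mul_apply]; ring)

lemma integral_deriv_periodic (G : ℝ → ℝ) (hG : ContDiff ℝ ∞ G)
    (hper : ∀ x, G (x + 2 * Real.pi) = G x) :
    ∫ x in (0:ℝ)..(2 * Real.pi), deriv G x = 0 := by
  rw [intervalIntegral.integral_deriv_eq_sub
    (fun x _ => (hG.differentiable (by norm_num)) x)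
    ((sd hG).continuous.intervalIntegrable _ _)]
  have := hper 0
  rw [zero_add] at this
  rw [this, sub_self]

section helpers
variable {E : Type*} [NormedAddCommGroup E] [NormedSpace ℝ E]

lemma infty_add_one : (∞ : WithTop ℕ∞) + 1 ≤ ∞ := by norm_num

lemma hasDerivAt_slice1 {Ψ : ℝ × ℝ → E} (hΨ : Differentiable ℝ Ψ) (x t : ℝ) :
    HasDerivAt (fun x' => Ψ (x', t)) (fderiv ℝ Ψ (x, t) (1, 0)) x :=
  (hΨ (x, t)).hasFDerivAt.comp_hasDerivAt x ((hasDerivAt_id x).prodMk (hasDerivAt_const x t))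

lemma hasDerivAt_slice2 {Ψ : ℝ × ℝ → E} (hΨ : Differentiable ℝ Ψ) (x t : ℝ) :
    HasDerivAt (fun t' => Ψ (x, t')) (fderiv ℝ Ψ (x, t) (0, 1)) t :=
  (hΨ (x, t)).hasFDerivAt.comp_hasDerivAt t ((hasDerivAt_const t x).prodMk (hasDerivAt_id t))

lemma contDiff_fderiv_apply {Ψ : ℝ × ℝ → E} (hΨ : ContDiff ℝ ∞ Ψ) (v : ℝ × ℝ) :
    ContDiff ℝ ∞ (fun p => fderiv ℝ Ψ p v) :=
  (hΨ.fderiv_right infty_add_one).clm_apply contDiff_const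

lemma pdx_eq {Ψ : ℝ × ℝ → E} (hΨ : ContDiff ℝ ∞ Ψ) :
    (fun p : ℝ × ℝ => deriv (fun x => Ψ (x, p.2)) p.1) = fun p => fderiv ℝ Ψ p (1, 0) := by
  funext p
  have := (hasDerivAt_slice1 (hΨ.differentiable (by norm_num)) p.1 p.2).deriv
  simpa using this

lemma pdt_eq {Ψ : ℝ × ℝ → E} (hΨ : ContDiff ℝ ∞ Ψ) :
    (fun p : ℝ × ℝ => deriv (fun t => Ψ (p.1, t)) p.2) = fun p => fderiv ℝ Ψ p (0, 1) := by
  funext p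
  have := (hasDerivAt_slice2 (hΨ.differentiable (by norm_num)) p.1 p.2).deriv
  simpa using this

lemma pdx_contDiff {Ψ : ℝ × ℝ → E} (hΨ : ContDiff ℝ ∞ Ψ) :
    ContDiff ℝ ∞ (fun p : ℝ × ℝ => deriv (fun x => Ψ (x, p.2)) p.1) := by
  rw [pdx_eq hΨ]; exact contDiff_fderiv_apply hΨ _

lemma pdt_contDiff {Ψ : ℝ × ℝ → E} (hΨ : ContDiff ℝ ∞ Ψ) :
    ContDiff ℝ ∞ (fun p : ℝ × ℝ => deriv (fun t => Ψ (p.1, t)) p.2) := by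
  rw [pdt_eq hΨ]; exact contDiff_fderiv_apply hΨ _

lemma swap_partial {Ψ : ℝ × ℝ → E} (hΨ : ContDiff ℝ ∞ Ψ) (x t : ℝ) :
    deriv (fun s => deriv (fun x' => Ψ (x', s)) x) t
      = deriv (fun x' => deriv (fun s => Ψ (x', s)) t) x := by
  have hd : Differentiable ℝ (fderiv ℝ Ψ) :=
    (hΨ.fderiv_right infty_add_one).differentiable (by norm_num)
  have hsym : ∀ v w, fderiv ℝ (fderiv ℝ Ψ) (x, t) v w = fderiv ℝ (fderiv ℝ Ψ) (x, t) w v := by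
    intro v w
    exact second_derivative_symmetric
      (fun y => ((hΨ.differentiable (by norm_num)) y).hasFDerivAt)
      (hd (x, t)).hasFDerivAt v w
  have e1 : (fun s => deriv (fun x' => Ψ (x', s)) x) = fun s => fderiv ℝ Ψ (x, s) (1, 0) := by
    funext s; exact (hasDerivAt_slice1 (hΨ.differentiable (by norm_num)) x s).deriv
  have e2 : (fun x' => deriv (fun s => Ψ (x', s)) t) = fun x' => fderiv ℝ Ψ (x', t) (0, 1) := by
    funext x'; exact (hasDerivAt_slice2 (hΨ.differentiable (by norm_num)) x' t).deriv
  rw [e1, e2]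
  have h1 : HasDerivAt (fun s => fderiv ℝ Ψ (x, s) (1, 0))
      (fderiv ℝ (fderiv ℝ Ψ) (x, t) (0, 1) (1, 0)) t := by
    have := (hasDerivAt_slice2 hd x t).clm_apply (hasDerivAt_const t ((1:ℝ), (0:ℝ)))
    simpa using this
  have h2 : HasDerivAt (fun x' => fderiv ℝ Ψ (x', t) (0, 1))
      (fderiv ℝ (fderiv ℝ Ψ) (x, t) (1, 0) (0, 1)) x := by
    have := (hasDerivAt_slice1 hd x t).clm_apply (hasDerivAt_const x ((0:ℝ), (1:ℝ)))
    simpa using this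
  rw [h1.deriv, h2.deriv, hsym]

end helpers

lemma per_deriv {E : Type*} [NormedAddCommGroup E] [NormedSpace ℝ E]
    (f : ℝ → E) (c : ℝ) (hf : ∀ x, f (x + c) = f x) :
    ∀ x, deriv f (x + c) = deriv f x := by
  intro x
  rw [← deriv_comp_add_const, show (fun y => f (y + c)) = f from funext hf]

/-- The first variation of the total curvature functional `P(γ) = ∮ p₁ dx` along a
non-stretching field `X = aγ + bγ' + cγ''` equals
`∮ (−p₁a + (−p₀' + (2/3)p₁'' − (2/3)p₁²)c) dx`, which is `ω_γ(X, X_P)` for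
`X_P = ((2/3)(p₁² − p₁'') + p₀')γ + (p₁' − p₀)γ' − p₁γ''`;
hence `X_P` is a Hamiltonian vector field for the total curvature functional. -/
theorem total_curvature_hamiltonian_field
    (γ : ℝ → Fin 3 → ℝ) (hγ : ContDiff ℝ (⊤ : ℕ∞) γ)
    (hper : ∀ x, γ (x + 2 * Real.pi) = γ x)
    (harc : ∀ x, det3 (γ x) (deriv γ x) (deriv (deriv γ) x) = 1)
    (p₀ p₁ : ℝ → ℝ)
    (hp₀ : ∀ x, p₀ x = det3 (deriv (deriv (deriv γ)) x) (deriv γ x) (deriv (deriv γ) x))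
    (hp₁ : ∀ x, p₁ x = det3 (γ x) (deriv (deriv (deriv γ)) x) (deriv (deriv γ) x))
    (a b c : ℝ → ℝ)
    (ha : ContDiff ℝ (⊤ : ℕ∞) a) (hb : ContDiff ℝ (⊤ : ℕ∞) b) (hc : ContDiff ℝ (⊤ : ℕ∞) c)
    (hpa : ∀ x, a (x + 2 * Real.pi) = a x)
    (hpb : ∀ x, b (x + 2 * Real.pi) = b x)
    (hpc : ∀ x, c (x + 2 * Real.pi) = c x)
    (hns : ∀ x, deriv b x = -a x - (1/3) * (deriv (deriv c) x + 2 * p₁ x * c x))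
    (X : ℝ → Fin 3 → ℝ)
    (hX : ∀ x, X x = a x • γ x + b x • deriv γ x + c x • deriv (deriv γ) x)
    (XP : ℝ → Fin 3 → ℝ)
    (hXP : ∀ x, XP x
        = ((2/3) * ((p₁ x)^2 - deriv (deriv p₁) x) + deriv p₀ x) • γ x
          + (deriv p₁ x - p₀ x) • deriv γ x - p₁ x • deriv (deriv γ) x) :
    (∀ Γ : ℝ → ℝ → Fin 3 → ℝ,
      ContDiff ℝ (⊤ : ℕ∞) (fun p : ℝ × ℝ => Γ p.1 p.2) →
      (∀ x, Γ x 0 = γ x) →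
      (∀ x, deriv (fun t => Γ x t) 0 = X x) →
      deriv (fun t => ∫ x in (0:ℝ)..(2 * Real.pi),
          det3 (Γ x t)
            (deriv (fun x' => deriv (fun x'' => deriv (fun x''' => Γ x''' t) x'') x') x)
            (deriv (fun x' => deriv (fun x'' => Γ x'' t) x') x)) 0
        = ∫ x in (0:ℝ)..(2 * Real.pi),
            (-p₁ x * a x
              + (-deriv p₀ x + (2/3) * deriv (deriv p₁) x - (2/3) * (p₁ x)^2) * c x)) ∧
    (∫ x in (0:ℝ)..(2 * Real.pi),
        (-p₁ x * a x
          + (-deriv p₀ x + (2/3) * deriv (deriv p₁) x - (2/3) * (p₁ x)^2) * c x))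
      = ∫ x in (0:ℝ)..(2 * Real.pi), det3 (X x) (deriv γ x) (XP x) := by
  -- basic smoothness
  have hγ' : ContDiff ℝ ∞ γ := hγ.of_le (by simp)
  have ha' : ContDiff ℝ ∞ a := ha.of_le (by simp)
  have hb' : ContDiff ℝ ∞ b := hb.of_le (by simp)
  have hc' : ContDiff ℝ ∞ c := hc.of_le (by simp)
  have hγ1 : ContDiff ℝ ∞ (deriv γ) := sdv hγ'
  have hγ2 : ContDiff ℝ ∞ (deriv (deriv γ)) := sdv hγ1
  have hγ3 : ContDiff ℝ ∞ (deriv (deriv (deriv γ))) := sdv hγ2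
  have hp0sm : ContDiff ℝ ∞ p₀ := by
    rw [funext hp₀]; exact contDiff_det3 hγ3 hγ1 hγ2
  have hp1sm : ContDiff ℝ ∞ p₁ := by
    rw [funext hp₁]; exact contDiff_det3 hγ' hγ3 hγ2
  have da : ContDiff ℝ ∞ (deriv a) := sd ha'
  have dda : ContDiff ℝ ∞ (deriv (deriv a)) := sd da
  have db : ContDiff ℝ ∞ (deriv b) := sd hb'
  have ddb : ContDiff ℝ ∞ (deriv (deriv b)) := sd db
  have dc : ContDiff ℝ ∞ (deriv c) := sd hc'
  have ddc : ContDiff ℝ ∞ (deriv (deriv c)) := sd dc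
  have dddc : ContDiff ℝ ∞ (deriv (deriv (deriv c))) := sd ddc
  have dp0 : ContDiff ℝ ∞ (deriv p₀) := sd hp0sm
  have dp1 : ContDiff ℝ ∞ (deriv p₁) := sd hp1sm
  have ddp1 : ContDiff ℝ ∞ (deriv (deriv p₁)) := sd dp1
  have hXsm : ContDiff ℝ ∞ X := by
    rw [funext hX]; exact ((ha'.smul hγ').add (hb'.smul hγ1)).add (hc'.smul hγ2)
  -- periodicity
  have perγ1 : ∀ x, deriv γ (x + 2 * Real.pi) = deriv γ x := per_deriv γ _ hper
  have perγ2 : ∀ x, deriv (deriv γ) (x + 2 * Real.pi) = deriv (deriv γ) x := per_deriv _ _ perγ1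
  have perγ3 : ∀ x, deriv (deriv (deriv γ)) (x + 2 * Real.pi) = deriv (deriv (deriv γ)) x :=
    per_deriv _ _ perγ2
  have perp0 : ∀ x, p₀ (x + 2 * Real.pi) = p₀ x := by
    intro x; rw [hp₀ (x + 2 * Real.pi), hp₀ x, perγ3 x, perγ1 x, perγ2 x]
  have perp1 : ∀ x, p₁ (x + 2 * Real.pi) = p₁ x := by
    intro x; rw [hp₁ (x + 2 * Real.pi), hp₁ x, hper x, perγ3 x, perγ2 x]
  have pera1 : ∀ x, deriv a (x + 2 * Real.pi) = deriv a x := per_deriv a _ hpa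
  have perb1 : ∀ x, deriv b (x + 2 * Real.pi) = deriv b x := per_deriv b _ hpb
  have perc1 : ∀ x, deriv c (x + 2 * Real.pi) = deriv c x := per_deriv c _ hpc
  have perc2 : ∀ x, deriv (deriv c) (x + 2 * Real.pi) = deriv (deriv c) x := per_deriv _ _ perc1
  have perc3 : ∀ x, deriv (deriv (deriv c)) (x + 2 * Real.pi) = deriv (deriv (deriv c)) x :=
    per_deriv _ _ perc2
  have perp11 : ∀ x, deriv p₁ (x + 2 * Real.pi) = deriv p₁ x := per_deriv p₁ _ perp1
  -- structure equation, componentwise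
  have E1 : ∀ x (i : Fin 3), deriv (deriv (deriv γ)) x i
      = p₀ x * γ x i + p₁ x * deriv γ x i := by
    intro x i
    have HD := hasDerivAt_det3 (hdv hγ' x) (hdv hγ1 x) (hdv hγ2 x)
    have h1 : deriv (fun y => det3 (γ y) (deriv γ y) (deriv (deriv γ) y)) x = 0 := by
      rw [funext harc]; exact deriv_const x 1
    rw [HD.deriv] at h1
    have hdetx := harc x
    rw [det3_expand] at hdetx
    rw [det3_expand, det3_expand, det3_expand] at h1
    rw [hp₀ x, hp₁ x, det3_expand, det3_expand]
    fin_cases i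
    · simp only [Fin.zero_eta]
      linear_combination (-(deriv (deriv (deriv γ)) x 0)) * hdetx + (deriv (deriv γ) x 0) * h1
    · simp only [Fin.mk_one]
      linear_combination (-(deriv (deriv (deriv γ)) x 1)) * hdetx + (deriv (deriv γ) x 1) * h1
    · simp only [Fin.reduceFinMk]
      linear_combination (-(deriv (deriv (deriv γ)) x 2)) * hdetx + (deriv (deriv γ) x 2) * h1
  -- first derivative of X, componentwise
  have hDX : ∀ x (i : Fin 3), deriv X x i
      = (deriv a x + c x * p₀ x) * γ x i
        + (a x + deriv b x + c x * p₁ x) * deriv γ x i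
        + (b x + deriv c x) * deriv (deriv γ) x i := by
    intro x i
    have hfun : (fun y => X y i)
        = fun y => a y * γ y i + b y * deriv γ y i + c y * deriv (deriv γ) y i := by
      funext y; rw [hX y]; simp
    have hv := proj3 (hdv hXsm x) i
    rw [hfun] at hv
    have H := (((hd ha' x).mul (proj3 (hdv hγ' x) i)).add
        ((hd hb' x).mul (proj3 (hdv hγ1 x) i))).add
        ((hd hc' x).mul (proj3 (hdv hγ2 x) i))
    have hu := hv.unique H
    rw [hu, E1 x i]; ring
  -- second derivative of X, componentwise
  have hD2X : ∀ x (i : Fin 3), deriv (deriv X) x i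
      = (deriv (deriv a) x + b x * p₀ x + 2 * (deriv c x * p₀ x) + c x * deriv p₀ x) * γ x i
        + (2 * deriv a x + deriv (deriv b) x + b x * p₁ x + 2 * (deriv c x * p₁ x)
            + c x * p₀ x + c x * deriv p₁ x) * deriv γ x i
        + (a x + 2 * deriv b x + deriv (deriv c) x + c x * p₁ x) * deriv (deriv γ) x i := by
    intro x i
    have hfun : (fun y => deriv X y i)
        = fun y => (deriv a y + c y * p₀ y) * γ y i
            + (a y + deriv b y + c y * p₁ y) * deriv γ y i
            + (b y + deriv c y) * deriv (deriv γ) y i := funext fun y => hDX y i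
    have hv := proj3 (hdv (sdv hXsm) x) i
    rw [hfun] at hv
    have H := ((((hd da x).add ((hd hc' x).mul (hd hp0sm x))).mul (proj3 (hdv hγ' x) i)).add
        ((((hd ha' x).add (hd db x)).add ((hd hc' x).mul (hd hp1sm x))).mul
          (proj3 (hdv hγ1 x) i))).add
        (((hd hb' x).add (hd dc x)).mul (proj3 (hdv hγ2 x) i))
    have hu := hv.unique H
    simp only [Pi.mul_apply, Pi.add_apply] at hu
    rw [hu, E1 x i]; ring
  -- third derivative of X, componentwise
  have hD3X : ∀ x (i : Fin 3), deriv (deriv (deriv X)) x i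
      = ((deriv (deriv (deriv a)) x + deriv b x * p₀ x + b x * deriv p₀ x
            + 2 * (deriv (deriv c) x * p₀ x) + 3 * (deriv c x * deriv p₀ x)
            + c x * deriv (deriv p₀) x)
          + (a x + 2 * deriv b x + deriv (deriv c) x + c x * p₁ x) * p₀ x) * γ x i
        + ((deriv (deriv a) x + b x * p₀ x + 2 * (deriv c x * p₀ x) + c x * deriv p₀ x)
            + (2 * deriv (deriv a) x + deriv (deriv (deriv b)) x + deriv b x * p₁ x
              + b x * deriv p₁ x + 2 * (deriv (deriv c) x * p₁ x)
              + 3 * (deriv c x * deriv p₁ x) + deriv c x * p₀ x + c x * deriv p₀ x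
              + c x * deriv (deriv p₁) x)
            + (a x + 2 * deriv b x + deriv (deriv c) x + c x * p₁ x) * p₁ x) * deriv γ x i
        + ((2 * deriv a x + deriv (deriv b) x + b x * p₁ x + 2 * (deriv c x * p₁ x)
              + c x * p₀ x + c x * deriv p₁ x)
            + (deriv a x + 2 * deriv (deriv b) x + deriv (deriv (deriv c)) x
              + deriv c x * p₁ x + c x * deriv p₁ x)) * deriv (deriv γ) x i := by
    intro x i
    have hfun : (fun y => deriv (deriv X) y i)
        = fun y => (deriv (deriv a) y + b y * p₀ y + 2 * (deriv c y * p₀ y)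
              + c y * deriv p₀ y) * γ y i
            + (2 * deriv a y + deriv (deriv b) y + b y * p₁ y + 2 * (deriv c y * p₁ y)
              + c y * p₀ y + c y * deriv p₁ y) * deriv γ y i
            + (a y + 2 * deriv b y + deriv (deriv c) y + c y * p₁ y) * deriv (deriv γ) y i :=
      funext fun y => hD2X y i
    have hv := proj3 (hdv (sdv (sdv hXsm)) x) i
    rw [hfun] at hv
    have Hc1 := (((hd dda x).add ((hd hb' x).mul (hd hp0sm x))).add
        (((hd dc x).mul (hd hp0sm x)).const_mul 2)).add ((hd hc' x).mul (hd dp0 x))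
    have Hc2 := ((((((hd da x).const_mul 2).add (hd ddb x)).add
        ((hd hb' x).mul (hd hp1sm x))).add (((hd dc x).mul (hd hp1sm x)).const_mul 2)).add
        ((hd hc' x).mul (hd hp0sm x))).add ((hd hc' x).mul (hd dp1 x))
    have Hc3 := (((hd ha' x).add ((hd db x).const_mul 2)).add (hd ddc x)).add
        ((hd hc' x).mul (hd hp1sm x))
    have H := ((Hc1.mul (proj3 (hdv hγ' x) i)).add
        (Hc2.mul (proj3 (hdv hγ1 x) i))).add (Hc3.mul (proj3 (hdv hγ2 x) i))
    have hu := hv.unique H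
    simp only [Pi.mul_apply, Pi.add_apply] at hu
    rw [hu, E1 x i]; ring
  -- differentiated non-stretching conditions
  have hns1 : ∀ x, deriv (deriv b) x
      = -deriv a x - (1/3) * (deriv (deriv (deriv c)) x
          + 2 * (deriv p₁ x * c x + p₁ x * deriv c x)) := by
    intro x
    rw [show deriv b = fun y => -a y - 1/3 * (deriv (deriv c) y + 2 * p₁ y * c y)
      from funext hns]
    have H := ((hd ha' x).neg).sub (((hd ddc x).add
        (((hd hp1sm x).const_mul 2).mul (hd hc' x))).const_mul (1/3))
    exact H.deriv.trans (by ring)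
  have hns2 : ∀ x, deriv (deriv (deriv b)) x
      = -deriv (deriv a) x - (1/3) * (deriv (deriv (deriv (deriv c))) x
          + 2 * (deriv (deriv p₁) x * c x + deriv p₁ x * deriv c x)
          + 2 * (deriv p₁ x * deriv c x + p₁ x * deriv (deriv c) x)) := by
    intro x
    rw [show deriv (deriv b) = fun y => -deriv a y - (1/3) * (deriv (deriv (deriv c)) y
        + 2 * (deriv p₁ y * c y + p₁ y * deriv c y)) from funext hns1]
    have H := ((hd da x).neg).sub (((hd dddc x).add
        ((((hd dp1 x).mul (hd hc' x)).add ((hd hp1sm x).mul (hd dc x))).const_mul 2)).const_mul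
        (1/3))
    exact H.deriv.trans (by ring)
  -- the exact-derivative correction term
  have hGd : ∀ x, deriv (fun y => 2 * deriv a y - (1/3) * deriv (deriv (deriv c)) y
        + 3 * (p₀ y * c y) + b y * p₁ y + 2 * (deriv c y * p₁ y)
        - (1/3) * (c y * deriv p₁ y)) x
      = 2 * deriv (deriv a) x - (1/3) * deriv (deriv (deriv (deriv c))) x
        + 3 * (deriv p₀ x * c x + p₀ x * deriv c x)
        + (deriv b x * p₁ x + b x * deriv p₁ x)
        + 2 * (deriv (deriv c) x * p₁ x + deriv c x * deriv p₁ x)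
        - (1/3) * (deriv c x * deriv p₁ x + c x * deriv (deriv p₁) x) := by
    intro x
    have H := (((((((hd da x).const_mul 2).sub ((hd dddc x).const_mul (1/3))).add
        (((hd hp0sm x).mul (hd hc' x)).const_mul 3)).add
        ((hd hb' x).mul (hd hp1sm x))).add
        (((hd dc x).mul (hd hp1sm x)).const_mul 2)).sub
        (((hd hc' x).mul (hd dp1 x)).const_mul (1/3)))
    exact H.deriv.trans (by ring)
  have hGsm : ContDiff ℝ ∞ (fun y => 2 * deriv a y - (1/3) * deriv (deriv (deriv c)) y
      + 3 * (p₀ y * c y) + b y * p₁ y + 2 * (deriv c y * p₁ y)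
      - (1/3) * (c y * deriv p₁ y)) :=
    ((((((contDiff_const.mul da).sub (contDiff_const.mul dddc)).add
      (contDiff_const.mul (hp0sm.mul hc'))).add (hb'.mul hp1sm)).add
      (contDiff_const.mul (dc.mul hp1sm))).sub (contDiff_const.mul (hc'.mul dp1)))
  have hGper : ∀ x, (fun y => 2 * deriv a y - (1/3) * deriv (deriv (deriv c)) y
        + 3 * (p₀ y * c y) + b y * p₁ y + 2 * (deriv c y * p₁ y)
        - (1/3) * (c y * deriv p₁ y)) (x + 2 * Real.pi)
      = (fun y => 2 * deriv a y - (1/3) * deriv (deriv (deriv c)) y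
        + 3 * (p₀ y * c y) + b y * p₁ y + 2 * (deriv c y * p₁ y)
        - (1/3) * (c y * deriv p₁ y)) x := by
    intro x
    simp only
    rw [pera1 x, perc3 x, perp0 x, hpc x, hpb x, perp1 x, perc1 x, perp11 x]
  -- the key pointwise identity
  have key : ∀ x, det3 (X x) (deriv (deriv (deriv γ)) x) (deriv (deriv γ) x)
      + det3 (γ x) (deriv (deriv (deriv X)) x) (deriv (deriv γ) x)
      + det3 (γ x) (deriv (deriv (deriv γ)) x) (deriv (deriv X) x)
      = (-p₁ x * a x
          + (-deriv p₀ x + (2/3) * deriv (deriv p₁) x - (2/3) * (p₁ x)^2) * c x)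
        + (2 * deriv (deriv a) x - (1/3) * deriv (deriv (deriv (deriv c))) x
          + 3 * (deriv p₀ x * c x + p₀ x * deriv c x)
          + (deriv b x * p₁ x + b x * deriv p₁ x)
          + 2 * (deriv (deriv c) x * p₁ x + deriv c x * deriv p₁ x)
          - (1/3) * (deriv c x * deriv p₁ x + c x * deriv (deriv p₁) x)) := by
    intro x
    have hdetx := harc x
    rw [det3_expand] at hdetx
    rw [det3_expand, det3_expand, det3_expand, hX x]
    simp only [Pi.add_apply, Pi.smul_apply, smul_eq_mul]
    rw [hD3X x 0, hD3X x 1, hD3X x 2, hD2X x 0, hD2X x 1, hD2X x 2,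
      E1 x 0, E1 x 1, E1 x 2, hns2 x, hns1 x, hns x]
    linear_combination
      (-p₁ x * a x
          + (-deriv p₀ x + (2/3) * deriv (deriv p₁) x - (2/3) * (p₁ x)^2) * c x
        + (2 * deriv (deriv a) x - (1/3) * deriv (deriv (deriv (deriv c))) x
          + 3 * (deriv p₀ x * c x + p₀ x * deriv c x)
          + ((-a x - 1/3 * (deriv (deriv c) x + 2 * p₁ x * c x)) * p₁ x + b x * deriv p₁ x)
          + 2 * (deriv (deriv c) x * p₁ x + deriv c x * deriv p₁ x)
          - (1/3) * (deriv c x * deriv p₁ x + c x * deriv (deriv p₁) x))) * hdetx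
  -- Part 2 pointwise
  have part2 : ∀ x, (-p₁ x * a x
        + (-deriv p₀ x + (2/3) * deriv (deriv p₁) x - (2/3) * (p₁ x)^2) * c x)
      = det3 (X x) (deriv γ x) (XP x) := by
    intro x
    have hdetx := harc x
    rw [det3_expand] at hdetx
    rw [det3_expand, hX x, hXP x]
    simp only [Pi.add_apply, Pi.sub_apply, Pi.smul_apply, smul_eq_mul]
    linear_combination (-(-p₁ x * a x
        + (-deriv p₀ x + (2/3) * deriv (deriv p₁) x - (2/3) * (p₁ x)^2) * c x)) * hdetx
  refine ⟨?_, intervalIntegral.integral_congr fun x _ => part2 x⟩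
  intro Γ hΓ hΓ0 hΓX
  have hΨ : ContDiff ℝ ∞ (fun p : ℝ × ℝ => Γ p.1 p.2) := hΓ.of_le (by simp)
  have hΦ1 : ContDiff ℝ ∞ (fun p : ℝ × ℝ => deriv (fun x'' => Γ x'' p.2) p.1) :=
    pdx_contDiff (Ψ := fun p : ℝ × ℝ => Γ p.1 p.2) hΨ
  have hΦ2 : ContDiff ℝ ∞
      (fun p : ℝ × ℝ => deriv (fun x' => deriv (fun x'' => Γ x'' p.2) x') p.1) :=
    pdx_contDiff (Ψ := fun p : ℝ × ℝ => deriv (fun x'' => Γ x'' p.2) p.1) hΦ1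
  have hΦ3 : ContDiff ℝ ∞
      (fun p : ℝ × ℝ => deriv (fun x' => deriv (fun x'' => deriv (fun x''' => Γ x''' p.2) x'') x') p.1) :=
    pdx_contDiff
      (Ψ := fun p : ℝ × ℝ => deriv (fun x' => deriv (fun x'' => Γ x'' p.2) x') p.1) hΦ2
  -- Clairaut chain
  have L1 : ∀ u, deriv (fun t => deriv (fun x'' => Γ x'' t) u) 0 = deriv X u := by
    intro u
    have h1 : deriv (fun t => deriv (fun x'' => Γ x'' t) u) 0
        = deriv (fun x'' => deriv (fun s => Γ x'' s) 0) u :=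
      swap_partial (Ψ := fun p : ℝ × ℝ => Γ p.1 p.2) hΨ u 0
    rw [h1, show (fun x'' => deriv (fun s => Γ x'' s) 0) = X from funext hΓX]
  have L2 : ∀ u, deriv (fun t => deriv (fun x' => deriv (fun x'' => Γ x'' t) x') u) 0
      = deriv (deriv X) u := by
    intro u
    have h1 : deriv (fun t => deriv (fun x' => deriv (fun x'' => Γ x'' t) x') u) 0
        = deriv (fun x' => deriv (fun s => deriv (fun x'' => Γ x'' s) x') 0) u :=
      swap_partial (Ψ := fun p : ℝ × ℝ => deriv (fun x'' => Γ x'' p.2) p.1) hΦ1 u 0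
    rw [h1,
      show (fun x' => deriv (fun s => deriv (fun x'' => Γ x'' s) x') 0) = deriv X
        from funext L1]
  have L3 : ∀ u, deriv
      (fun t => deriv (fun x' => deriv (fun x'' => deriv (fun x''' => Γ x''' t) x'') x') u) 0
      = deriv (deriv (deriv X)) u := by
    intro u
    have h1 : deriv
        (fun t => deriv (fun x' => deriv (fun x'' => deriv (fun x''' => Γ x''' t) x'') x') u) 0
        = deriv (fun x' => deriv
            (fun s => deriv (fun x'' => deriv (fun x''' => Γ x''' s) x'') x') 0) u :=
      swap_partial
        (Ψ := fun p : ℝ × ℝ => deriv (fun x' => deriv (fun x'' => Γ x'' p.2) x') p.1) hΦ2 u 0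
    rw [h1,
      show (fun x' => deriv (fun s => deriv (fun x'' => deriv (fun x''' => Γ x''' s) x'') x') 0)
        = deriv (deriv X) from funext L2]
  -- the t-derivative of the integrand at t = 0
  have hFt0 : ∀ u, deriv (fun s => det3 (Γ u s)
        (deriv (fun x' => deriv (fun x'' => deriv (fun x''' => Γ x''' s) x'') x') u)
        (deriv (fun x' => deriv (fun x'' => Γ x'' s) x') u)) 0
      = det3 (X u) (deriv (deriv (deriv γ)) u) (deriv (deriv γ) u)
        + det3 (γ u) (deriv (deriv (deriv X)) u) (deriv (deriv γ) u)
        + det3 (γ u) (deriv (deriv (deriv γ)) u) (deriv (deriv X) u) := by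
    intro u
    have hA : HasDerivAt (fun s => Γ u s) (X u) 0 := by
      have hdiff : DifferentiableAt ℝ (fun s => Γ u s) 0 :=
        ((hΨ.comp ((contDiff_const (c := u)).prodMk contDiff_id)).differentiable
          (by norm_num)).differentiableAt
      have h := hdiff.hasDerivAt
      rwa [hΓX u] at h
    have hB : HasDerivAt
        (fun s => deriv (fun x' => deriv (fun x'' => deriv (fun x''' => Γ x''' s) x'') x') u)
        (deriv (deriv (deriv X)) u) 0 := by
      have hdiff : DifferentiableAt ℝ
          (fun s => deriv (fun x' => deriv (fun x'' => deriv (fun x''' => Γ x''' s) x'') x') u)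
          0 :=
        ((hΦ3.comp ((contDiff_const (c := u)).prodMk contDiff_id)).differentiable
          (by norm_num)).differentiableAt
      have h := hdiff.hasDerivAt
      rwa [L3 u] at h
    have hC2 : HasDerivAt
        (fun s => deriv (fun x' => deriv (fun x'' => Γ x'' s) x') u)
        (deriv (deriv X) u) 0 := by
      have hdiff : DifferentiableAt ℝ
          (fun s => deriv (fun x' => deriv (fun x'' => Γ x'' s) x') u) 0 :=
        ((hΦ2.comp ((contDiff_const (c := u)).prodMk contDiff_id)).differentiable
          (by norm_num)).differentiableAt
      have h := hdiff.hasDerivAt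
      rwa [L2 u] at h
    have H : HasDerivAt (fun s => det3 (Γ u s)
          (deriv (fun x' => deriv (fun x'' => deriv (fun x''' => Γ x''' s) x'') x') u)
          (deriv (fun x' => deriv (fun x'' => Γ x'' s) x') u))
        (det3 (X u)
            (deriv (fun x' => deriv (fun x'' => deriv (fun x''' => Γ x''' 0) x'') x') u)
            (deriv (fun x' => deriv (fun x'' => Γ x'' 0) x') u)
          + det3 (Γ u 0) (deriv (deriv (deriv X)) u)
            (deriv (fun x' => deriv (fun x'' => Γ x'' 0) x') u)
          + det3 (Γ u 0)
            (deriv (fun x' => deriv (fun x'' => deriv (fun x''' => Γ x''' 0) x'') x') u)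
            (deriv (deriv X) u)) 0 := hasDerivAt_det3 hA hB hC2
    rw [H.deriv, hΓ0 u,
      show (fun x''' => Γ x''' 0) = γ from funext hΓ0]
  -- continuity facts
  have ddddc : ContDiff ℝ ∞ (deriv (deriv (deriv (deriv c)))) := sd dddc
  have hTcont : Continuous (fun x => -p₁ x * a x
          + (-deriv p₀ x + (2/3) * deriv (deriv p₁) x - (2/3) * (p₁ x)^2) * c x) :=
    ((hp1sm.continuous.neg.mul ha'.continuous)).add
      ((((dp0.continuous.neg).add (continuous_const.mul ddp1.continuous)).sub
        (continuous_const.mul (hp1sm.continuous.pow 2))).mul hc'.continuous)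
  have hGpcont : Continuous (fun x => 2 * deriv (deriv a) x - (1/3) * deriv (deriv (deriv (deriv c))) x
          + 3 * (deriv p₀ x * c x + p₀ x * deriv c x)
          + (deriv b x * p₁ x + b x * deriv p₁ x)
          + 2 * (deriv (deriv c) x * p₁ x + deriv c x * deriv p₁ x)
          - (1/3) * (deriv c x * deriv p₁ x + c x * deriv (deriv p₁) x)) :=
    (((((continuous_const.mul dda.continuous).sub
      (continuous_const.mul ddddc.continuous)).add
      (continuous_const.mul ((dp0.continuous.mul hc'.continuous).add
        (hp0sm.continuous.mul dc.continuous)))).add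
      ((db.continuous.mul hp1sm.continuous).add (hb'.continuous.mul dp1.continuous))).add
      (continuous_const.mul ((ddc.continuous.mul hp1sm.continuous).add
        (dc.continuous.mul dp1.continuous)))).sub
      (continuous_const.mul ((dc.continuous.mul dp1.continuous).add
        (hc'.continuous.mul ddp1.continuous)))
  have e0 : ∀ x, deriv (fun s => det3 (Γ x s)
        (deriv (fun x' => deriv (fun x'' => deriv (fun x''' => Γ x''' s) x'') x') x)
        (deriv (fun x' => deriv (fun x'' => Γ x'' s) x') x)) 0
      = (-p₁ x * a x
          + (-deriv p₀ x + (2/3) * deriv (deriv p₁) x - (2/3) * (p₁ x)^2) * c x)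
        + (2 * deriv (deriv a) x - (1/3) * deriv (deriv (deriv (deriv c))) x
          + 3 * (deriv p₀ x * c x + p₀ x * deriv c x)
          + (deriv b x * p₁ x + b x * deriv p₁ x)
          + 2 * (deriv (deriv c) x * p₁ x + deriv c x * deriv p₁ x)
          - (1/3) * (deriv c x * deriv p₁ x + c x * deriv (deriv p₁) x)) := fun x => (hFt0 x).trans (key x)
  -- dominated differentiation under the integral sign
  have pi2 : (0:ℝ) ≤ 2 * Real.pi := by positivity
  have hFJ : ContDiff ℝ ∞ (fun p : ℝ × ℝ => det3 (Γ p.1 p.2)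
      (deriv (fun x' => deriv (fun x'' => deriv (fun x''' => Γ x''' p.2) x'') x') p.1)
      (deriv (fun x' => deriv (fun x'' => Γ x'' p.2) x') p.1)) :=
    contDiff_det3 hΨ hΦ3 hΦ2
  have hDt : ContDiff ℝ ∞ (fun p : ℝ × ℝ => deriv (fun s => det3 (Γ p.1 s)
      (deriv (fun x' => deriv (fun x'' => deriv (fun x''' => Γ x''' s) x'') x') p.1)
      (deriv (fun x' => deriv (fun x'' => Γ x'' s) x') p.1)) p.2) :=
    pdt_contDiff (Ψ := fun p : ℝ × ℝ => det3 (Γ p.1 p.2)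
      (deriv (fun x' => deriv (fun x'' => deriv (fun x''' => Γ x''' p.2) x'') x') p.1)
      (deriv (fun x' => deriv (fun x'' => Γ x'' p.2) x') p.1)) hFJ
  obtain ⟨C, hC⟩ := ((isCompact_Icc (a := (0:ℝ)) (b := 2 * Real.pi)).prod
      (isCompact_Icc (a := (-1:ℝ)) (b := 1))).exists_bound_of_continuousOn
      (hDt.continuous.continuousOn)
  have hmeas : ∀ᶠ t in nhds (0:ℝ), MeasureTheory.AEStronglyMeasurable
      (fun x => det3 (Γ x t)
        (deriv (fun x' => deriv (fun x'' => deriv (fun x''' => Γ x''' t) x'') x') x)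
        (deriv (fun x' => deriv (fun x'' => Γ x'' t) x') x))
      (MeasureTheory.volume.restrict (Set.uIoc (0:ℝ) (2 * Real.pi))) :=
    Filter.Eventually.of_forall fun t =>
      (hFJ.continuous.comp (continuous_id.prodMk continuous_const)).aestronglyMeasurable
  have hint0 : IntervalIntegrable (fun x => det3 (Γ x 0)
      (deriv (fun x' => deriv (fun x'' => deriv (fun x''' => Γ x''' 0) x'') x') x)
      (deriv (fun x' => deriv (fun x'' => Γ x'' 0) x') x))
      MeasureTheory.volume 0 (2 * Real.pi) :=
    (hFJ.continuous.comp (continuous_id.prodMk continuous_const)).intervalIntegrable _ _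
  have hmeas' : MeasureTheory.AEStronglyMeasurable
      (fun x => deriv (fun s => det3 (Γ x s)
        (deriv (fun x' => deriv (fun x'' => deriv (fun x''' => Γ x''' s) x'') x') x)
        (deriv (fun x' => deriv (fun x'' => Γ x'' s) x') x)) 0)
      (MeasureTheory.volume.restrict (Set.uIoc (0:ℝ) (2 * Real.pi))) :=
    (hDt.continuous.comp (continuous_id.prodMk continuous_const)).aestronglyMeasurable
  have hbound : ∀ᵐ x ∂MeasureTheory.volume, x ∈ Set.uIoc (0:ℝ) (2 * Real.pi) →
      ∀ t ∈ Metric.ball (0:ℝ) 1,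
        ‖deriv (fun s => det3 (Γ x s)
          (deriv (fun x' => deriv (fun x'' => deriv (fun x''' => Γ x''' s) x'') x') x)
          (deriv (fun x' => deriv (fun x'' => Γ x'' s) x') x)) t‖ ≤ C :=
    Filter.Eventually.of_forall (fun x hx t ht => by
      have hx' : x ∈ Set.Icc (0:ℝ) (2 * Real.pi) := by
        rw [Set.uIoc_of_le pi2] at hx; exact ⟨hx.1.le, hx.2⟩
      have ht' : t ∈ Set.Icc (-1:ℝ) 1 := by
        have h2 := Metric.mem_ball.mp ht
        rw [Real.dist_eq, sub_zero] at h2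
        exact abs_le.mp h2.le
      exact hC (x, t) ⟨hx', ht'⟩)
  have bint : IntervalIntegrable (fun _ : ℝ => C) MeasureTheory.volume 0 (2 * Real.pi) :=
    intervalIntegrable_const
  have hdiff : ∀ᵐ x ∂MeasureTheory.volume, x ∈ Set.uIoc (0:ℝ) (2 * Real.pi) →
      ∀ t ∈ Metric.ball (0:ℝ) 1,
        HasDerivAt (fun t' => det3 (Γ x t')
          (deriv (fun x' => deriv (fun x'' => deriv (fun x''' => Γ x''' t') x'') x') x)
          (deriv (fun x' => deriv (fun x'' => Γ x'' t') x') x))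
          (deriv (fun s => det3 (Γ x s)
            (deriv (fun x' => deriv (fun x'' => deriv (fun x''' => Γ x''' s) x'') x') x)
            (deriv (fun x' => deriv (fun x'' => Γ x'' s) x') x)) t) t :=
    Filter.Eventually.of_forall (fun x _ t _ =>
      (((hFJ.comp ((contDiff_const (c := x)).prodMk contDiff_id)).differentiable
        (by norm_num)).differentiableAt).hasDerivAt)
  have hMAIN := intervalIntegral.hasDerivAt_integral_of_dominated_loc_of_deriv_le
    (F := fun t x => det3 (Γ x t)
      (deriv (fun x' => deriv (fun x'' => deriv (fun x''' => Γ x''' t) x'') x') x)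
      (deriv (fun x' => deriv (fun x'' => Γ x'' t) x') x))
    (F' := fun t x => deriv (fun s => det3 (Γ x s)
      (deriv (fun x' => deriv (fun x'' => deriv (fun x''' => Γ x''' s) x'') x') x)
      (deriv (fun x' => deriv (fun x'' => Γ x'' s) x') x)) t)
    (x₀ := (0:ℝ)) (a := 0) (b := 2 * Real.pi) (bound := fun _ => C) (s := Metric.ball (0:ℝ) 1)
    (Metric.ball_mem_nhds _ one_pos) hmeas hint0 hmeas' hbound bint hdiff
  have HD2 : HasDerivAt (fun t => ∫ x in (0:ℝ)..(2 * Real.pi), det3 (Γ x t)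
        (deriv (fun x' => deriv (fun x'' => deriv (fun x''' => Γ x''' t) x'') x') x)
        (deriv (fun x' => deriv (fun x'' => Γ x'' t) x') x))
      (∫ x in (0:ℝ)..(2 * Real.pi), deriv (fun s => det3 (Γ x s)
        (deriv (fun x' => deriv (fun x'' => deriv (fun x''' => Γ x''' s) x'') x') x)
        (deriv (fun x' => deriv (fun x'' => Γ x'' s) x') x)) 0) 0 := hMAIN.2
  rw [HD2.deriv]
  rw [show (∫ x in (0:ℝ)..(2 * Real.pi), deriv (fun s => det3 (Γ x s)
        (deriv (fun x' => deriv (fun x'' => deriv (fun x''' => Γ x''' s) x'') x') x)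
        (deriv (fun x' => deriv (fun x'' => Γ x'' s) x') x)) 0)
      = ∫ x in (0:ℝ)..(2 * Real.pi), ((-p₁ x * a x
          + (-deriv p₀ x + (2/3) * deriv (deriv p₁) x - (2/3) * (p₁ x)^2) * c x)
        + (2 * deriv (deriv a) x - (1/3) * deriv (deriv (deriv (deriv c))) x
          + 3 * (deriv p₀ x * c x + p₀ x * deriv c x)
          + (deriv b x * p₁ x + b x * deriv p₁ x)
          + 2 * (deriv (deriv c) x * p₁ x + deriv c x * deriv p₁ x)
          - (1/3) * (deriv c x * deriv p₁ x + c x * deriv (deriv p₁) x)))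
    from intervalIntegral.integral_congr fun x _ => e0 x]
  rw [intervalIntegral.integral_add (hTcont.intervalIntegrable _ _)
    (hGpcont.intervalIntegrable _ _)]
  have hGP0 : (∫ x in (0:ℝ)..(2 * Real.pi), (2 * deriv (deriv a) x - (1/3) * deriv (deriv (deriv (deriv c))) x
          + 3 * (deriv p₀ x * c x + p₀ x * deriv c x)
          + (deriv b x * p₁ x + b x * deriv p₁ x)
          + 2 * (deriv (deriv c) x * p₁ x + deriv c x * deriv p₁ x)
          - (1/3) * (deriv c x * deriv p₁ x + c x * deriv (deriv p₁) x))) = 0 := by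
    rw [show (∫ x in (0:ℝ)..(2 * Real.pi), (2 * deriv (deriv a) x - (1/3) * deriv (deriv (deriv (deriv c))) x
          + 3 * (deriv p₀ x * c x + p₀ x * deriv c x)
          + (deriv b x * p₁ x + b x * deriv p₁ x)
          + 2 * (deriv (deriv c) x * p₁ x + deriv c x * deriv p₁ x)
          - (1/3) * (deriv c x * deriv p₁ x + c x * deriv (deriv p₁) x)))
        = ∫ x in (0:ℝ)..(2 * Real.pi), deriv (fun y => 2 * deriv a y
          - (1/3) * deriv (deriv (deriv c)) y + 3 * (p₀ y * c y) + b y * p₁ y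
          + 2 * (deriv c y * p₁ y) - (1/3) * (c y * deriv p₁ y)) x
      from intervalIntegral.integral_congr fun x _ => (hGd x).symm]
    exact integral_deriv_periodic _ hGsm hGper
  rw [hGP0, add_zero]
end
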